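/- Vanishing of angular-momentum flux through half-circles: Let n ≥ 2 and let u be a smooth harmonic map with free boundary on 𝔻⁺ ∪ I with values in ℝ^{n+1}. Then for all 1 ≤ i, j ≤ n+1 and all 0 < r < 1, the flux of the vector field u_j ∇u_i − u_i ∇u_j through the half-circle ∂𝔻_r⁺ = {z ∈ ℝ² : |z| = r, t ≥ 0} vanishes: ∫₀^π (u_j ∂_ρ u_i − u_i ∂_ρ u_j)(r cos θ, r sin θ) r dθ = 0, where ∂_ρ denotes the radial directional derivative. -/

import Mathlib

open MeasureTheory Filter Topology Set
open scoped RealInnerProductSpace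

noncomputable section

/-- The Euclidean plane. -/
abbrev E2 : Type := EuclideanSpace ℝ (Fin 2)
/-- Euclidean space `ℝ^{n+1}`. -/
abbrev Ey (n : ℕ) : Type := EuclideanSpace ℝ (Fin (n + 1))

/-- Standard basis vectors of the plane. -/
def e2 (i : Fin 2) : E2 := EuclideanSpace.single i 1

/-- The point of the plane with coordinates `(s, t)`. -/
def pt (s t : ℝ) : E2 := WithLp.toLp 2 ![s, t]

/-- The Laplacian of a map on the plane. -/
def lapl {F : Type*} [NormedAddCommGroup F] [NormedSpace ℝ F] (u : E2 → F) (x : E2) : F :=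
  ∑ i : Fin 2, fderiv ℝ (fun y => fderiv ℝ u y (e2 i)) x (e2 i)

/-- The squared (Frobenius) norm `|∇u|² = Σ_j |∇u_j|²` of the gradient. -/
def gradSq {F : Type*} [NormedAddCommGroup F] [NormedSpace ℝ F] (u : E2 → F) (x : E2) : ℝ :=
  ∑ i : Fin 2, ‖fderiv ℝ u x (e2 i)‖ ^ 2

/-- The open half-disc `𝔻⁺_ρ` of radius `ρ`. -/
def halfDisc (ρ : ℝ) : Set E2 := {x | x 0 ^ 2 + x 1 ^ 2 < ρ ^ 2 ∧ 0 < x 1}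

/-- The closed half-disc of radius `ρ`. -/
def closedHalfDisc (ρ : ℝ) : Set E2 := {x | x 0 ^ 2 + x 1 ^ 2 ≤ ρ ^ 2 ∧ 0 ≤ x 1}

/-- The boundary segment `I = (-1,1) × {0}`. -/
def Iseg : Set E2 := {x | |x 0| < 1 ∧ x 1 = 0}

/-- A smooth harmonic map with free boundary on `𝔻⁺ ∪ I`, i.e. a map smooth on a
neighbourhood of the closed half-disc, harmonic in `𝔻⁺`, with values in the closed unit
ball, unit norm on `I`, where `∂_t u` is parallel to `u` on `I`. -/
structure IsFBHarmonic (n : ℕ) (u : E2 → Ey n) : Prop where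
  smooth : ∃ V : Set E2, IsOpen V ∧ closedHalfDisc 1 ⊆ V ∧ ContDiffOn ℝ (⊤ : ℕ∞) u V
  harmonic : ∀ x ∈ halfDisc 1, lapl u x = 0
  norm_le : ∀ x ∈ closedHalfDisc 1, ‖u x‖ ≤ 1
  norm_eq : ∀ x ∈ Iseg, ‖u x‖ = 1
  free : ∀ x ∈ Iseg, ∃ c : ℝ, fderiv ℝ u x (e2 1) = c • u x

/-- The radial directional derivative `∂_ρ u(z) = (z/|z|) ⬝ ∇u(z)`. -/
def radialDeriv {n : ℕ} (u : E2 → Ey n) (z : E2) : Ey n :=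
  fderiv ℝ u z (‖z‖⁻¹ • z)

/-!
In polar coordinates `(ρ, θ)` the field `u_j ∇u_i - u_i ∇u_j` becomes a field on the
rectangle `[0, r] × [0, π]` whose divergence is `ρ (u_j Δu_i - u_i Δu_j) = 0`. By the divergence
theorem on this rectangle, the flux through the half-circle `ρ = r` equals the sum of the fluxes
through the other three sides. The side `ρ = 0` contributes nothing because of the Jacobian
factor `ρ`, and the sides `θ = 0, π` lie on `I`, where the normal component
`u_j ∂_t u_i - u_i ∂_t u_j` vanishes because `∂_t u` is parallel to `u`.
-/

open Real

def polarPt (p : ℝ × ℝ) : E2 := pt (p.1 * cos p.2) (p.1 * sin p.2)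

theorem pt_eq_smul_add (s t : ℝ) : pt s t = s • e2 0 + t • e2 1 := by
  ext k
  fin_cases k <;> simp [pt, e2]

theorem polarPt_eq_smul_add (p : ℝ × ℝ) :
    polarPt p = (p.1 * cos p.2) • e2 0 + (p.1 * sin p.2) • e2 1 :=
  pt_eq_smul_add _ _

@[fun_prop]
theorem differentiable_polarPt : Differentiable ℝ polarPt := by
  rw [funext polarPt_eq_smul_add]
  fun_prop

theorem fderiv_polarPt_apply (p v : ℝ × ℝ) :
    fderiv ℝ polarPt p v = (v.1 * cos p.2 - p.1 * v.2 * sin p.2) • e2 0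
      + (v.1 * sin p.2 + p.1 * v.2 * cos p.2) • e2 1 := by
  have hcos := (hasDerivAt_cos p.2).comp_hasFDerivAt p (hasFDerivAt_snd (𝕜 := ℝ) (E := ℝ))
  have hsin := (hasDerivAt_sin p.2).comp_hasFDerivAt p (hasFDerivAt_snd (𝕜 := ℝ) (E := ℝ))
  have h := (((hasFDerivAt_fst.mul hcos).smul_const (e2 0)).add
    ((hasFDerivAt_fst.mul hsin).smul_const (e2 1))).congr_of_eventuallyEq
    (f₁ := polarPt) (.of_forall polarPt_eq_smul_add)
  rw [h.fderiv]
  simp only [add_apply, smul_apply, ContinuousLinearMap.smulRight_apply,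
    ContinuousLinearMap.coe_fst', ContinuousLinearMap.coe_snd', Function.comp_apply, smul_eq_mul]
  congr 2 <;> ring

theorem mul_cos_sq_add_mul_sin_sq (s θ : ℝ) : (s * cos θ) ^ 2 + (s * sin θ) ^ 2 = s ^ 2 := by
  rw [mul_pow, mul_pow, ← mul_add, cos_sq_add_sin_sq, mul_one]

theorem polarPt_mem_closedHalfDisc {r s θ : ℝ} (hs : s ∈ Icc 0 r) (hθ : θ ∈ Icc 0 π) :
    polarPt (s, θ) ∈ closedHalfDisc r := by
  refine ⟨?_, mul_nonneg hs.1 (sin_nonneg_of_nonneg_of_le_pi hθ.1 hθ.2)⟩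
  show (s * cos θ) ^ 2 + (s * sin θ) ^ 2 ≤ r ^ 2
  rw [mul_cos_sq_add_mul_sin_sq]
  exact pow_le_pow_left₀ hs.1 hs.2 2

theorem polarPt_mem_halfDisc {r s θ : ℝ} (hs : s ∈ Ioo 0 r) (hθ : θ ∈ Ioo 0 π) :
    polarPt (s, θ) ∈ halfDisc r := by
  refine ⟨?_, mul_pos hs.1 (sin_pos_of_pos_of_lt_pi hθ.1 hθ.2)⟩
  show (s * cos θ) ^ 2 + (s * sin θ) ^ 2 < r ^ 2
  rw [mul_cos_sq_add_mul_sin_sq]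
  exact pow_lt_pow_left₀ hs.2 hs.1.le two_ne_zero

theorem norm_polarPt {r : ℝ} (hr : 0 ≤ r) (θ : ℝ) : ‖polarPt (r, θ)‖ = r := by
  rw [EuclideanSpace.norm_eq, Fin.sum_univ_two]
  simp only [Real.norm_eq_abs, sq_abs]
  exact (congrArg _ (mul_cos_sq_add_mul_sin_sq r θ)).trans (Real.sqrt_sq hr)

theorem closedHalfDisc_subset {r s : ℝ} (hr : 0 ≤ r) (hrs : r ≤ s) :
    closedHalfDisc r ⊆ closedHalfDisc s :=
  fun _ hx => ⟨hx.1.trans (pow_le_pow_left₀ hr hrs 2), hx.2⟩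

theorem halfDisc_subset {r s : ℝ} (hr : 0 ≤ r) (hrs : r ≤ s) : halfDisc r ⊆ halfDisc s :=
  fun _ hx => ⟨hx.1.trans_le (pow_le_pow_left₀ hr hrs 2), hx.2⟩

theorem mem_Iseg_of_mem_closedHalfDisc {r : ℝ} (hr0 : 0 ≤ r) (hr1 : r < 1) {x : E2}
    (hx : x ∈ closedHalfDisc r) (hx1 : x 1 = 0) : x ∈ Iseg := by
  refine ⟨(sq_lt_one_iff_abs_lt_one _).1 ?_, hx1⟩
  have hx0 : x 0 ^ 2 + x 1 ^ 2 ≤ r ^ 2 := hx.1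
  rw [hx1] at hx0
  nlinarith

section PolarFlux

variable (P Q : E2 → ℝ)

/- `(P, Q)` transported to polar coordinates `p = (ρ, θ)`: `ρ` times its radial component, and
its angular component. -/
def polarRadialFlux (p : ℝ × ℝ) : ℝ :=
  (cos p.2 * P (polarPt p) + sin p.2 * Q (polarPt p)) * p.1

def polarAngularFlux (p : ℝ × ℝ) : ℝ :=
  -sin p.2 * P (polarPt p) + cos p.2 * Q (polarPt p)

variable {P Q}

theorem polarFlux_divergence {p : ℝ × ℝ}
    (hP : DifferentiableAt ℝ P (polarPt p)) (hQ : DifferentiableAt ℝ Q (polarPt p)) :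
    fderiv ℝ (polarRadialFlux P Q) p (1, 0) + fderiv ℝ (polarAngularFlux P Q) p (0, 1)
      = p.1 * (fderiv ℝ P (polarPt p) (e2 0) + fderiv ℝ Q (polarPt p) (e2 1)) := by
  have hcos := (hasDerivAt_cos p.2).comp_hasFDerivAt p (hasFDerivAt_snd (𝕜 := ℝ) (E := ℝ))
  have hsin := (hasDerivAt_sin p.2).comp_hasFDerivAt p (hasFDerivAt_snd (𝕜 := ℝ) (E := ℝ))
  have hPz := hP.hasFDerivAt.comp p (differentiable_polarPt p).hasFDerivAt
  have hQz := hQ.hasFDerivAt.comp p (differentiable_polarPt p).hasFDerivAt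
  have hf := ((hcos.mul hPz).add (hsin.mul hQz)).mul hasFDerivAt_fst
  have hg := (hsin.neg.mul hPz).add (hcos.mul hQz)
  rw [(hf.congr_of_eventuallyEq (f₁ := polarRadialFlux P Q) (.of_forall fun _ => rfl)).fderiv,
    (hg.congr_of_eventuallyEq (f₁ := polarAngularFlux P Q) (.of_forall fun _ => rfl)).fderiv]
  simp only [Pi.add_apply, Pi.mul_apply, Pi.neg_apply, Function.comp_apply, add_apply,
    smul_apply, neg_apply, ContinuousLinearMap.comp_apply, ContinuousLinearMap.coe_fst',
    ContinuousLinearMap.coe_snd', fderiv_polarPt_apply, map_add, map_smul, map_neg, smul_eq_mul,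
    neg_smul, smul_neg, smul_add, mul_one, one_mul, mul_zero, zero_mul, sub_zero, add_zero,
    neg_zero, zero_sub, zero_add]
  linear_combination p.1 * (fderiv ℝ P (polarPt p) (e2 0) + fderiv ℝ Q (polarPt p) (e2 1))
    * sin_sq_add_cos_sq p.2

theorem differentiableAt_polarRadialFlux {p : ℝ × ℝ}
    (hP : DifferentiableAt ℝ P (polarPt p)) (hQ : DifferentiableAt ℝ Q (polarPt p)) :
    DifferentiableAt ℝ (polarRadialFlux P Q) p := by
  unfold polarRadialFlux
  fun_prop

theorem differentiableAt_polarAngularFlux {p : ℝ × ℝ}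
    (hP : DifferentiableAt ℝ P (polarPt p)) (hQ : DifferentiableAt ℝ Q (polarPt p)) :
    DifferentiableAt ℝ (polarAngularFlux P Q) p := by
  unfold polarAngularFlux
  fun_prop

theorem continuousOn_polarRadialFlux {s : Set E2} {t : Set (ℝ × ℝ)} (hP : ContinuousOn P s)
    (hQ : ContinuousOn Q s) (hts : MapsTo polarPt t s) :
    ContinuousOn (polarRadialFlux P Q) t := by
  have hPz := hP.comp differentiable_polarPt.continuous.continuousOn hts
  have hQz := hQ.comp differentiable_polarPt.continuous.continuousOn hts
  exact (((continuous_cos.comp continuous_snd).continuousOn.mul hPz).add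
    ((continuous_sin.comp continuous_snd).continuousOn.mul hQz)).mul continuous_fst.continuousOn

theorem continuousOn_polarAngularFlux {s : Set E2} {t : Set (ℝ × ℝ)} (hP : ContinuousOn P s)
    (hQ : ContinuousOn Q s) (hts : MapsTo polarPt t s) :
    ContinuousOn (polarAngularFlux P Q) t := by
  have hPz := hP.comp differentiable_polarPt.continuous.continuousOn hts
  have hQz := hQ.comp differentiable_polarPt.continuous.continuousOn hts
  exact ((continuous_sin.comp continuous_snd).neg.continuousOn.mul hPz).add
    ((continuous_cos.comp continuous_snd).continuousOn.mul hQz)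

end PolarFlux

theorem integral_polarRadialFlux_eq_zero {P Q : E2 → ℝ} {r : ℝ} (hr : 0 ≤ r)
    (hPc : ContinuousOn P (closedHalfDisc r)) (hQc : ContinuousOn Q (closedHalfDisc r))
    (hPd : ∀ x ∈ halfDisc r, DifferentiableAt ℝ P x)
    (hQd : ∀ x ∈ halfDisc r, DifferentiableAt ℝ Q x)
    (hdiv : ∀ x ∈ halfDisc r, fderiv ℝ P x (e2 0) + fderiv ℝ Q x (e2 1) = 0)
    (hQ : ∀ x ∈ closedHalfDisc r, x 1 = 0 → Q x = 0) :
    ∫ θ in (0 : ℝ)..π, polarRadialFlux P Q (r, θ) = 0 := by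
  set f := polarRadialFlux P Q
  set g := polarAngularFlux P Q
  have hle : ((0 : ℝ), (0 : ℝ)) ≤ (r, π) := ⟨hr, pi_pos.le⟩
  have hmaps : MapsTo polarPt (Icc (0, 0) (r, π)) (closedHalfDisc r) := by
    rintro ⟨s, θ⟩ ⟨hs, hθ⟩
    exact polarPt_mem_closedHalfDisc ⟨hs.1, hθ.1⟩ ⟨hs.2, hθ.2⟩
  have hinterior : ∀ p ∈ Ioo (0 : ℝ) r ×ˢ Ioo 0 π, polarPt p ∈ halfDisc r :=
    fun p hp => polarPt_mem_halfDisc hp.1 hp.2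
  have hdiv_polar : ∀ p ∈ Ioo (0 : ℝ) r ×ˢ Ioo 0 π,
      fderiv ℝ f p (1, 0) + fderiv ℝ g p (0, 1) = 0 := by
    intro p hp
    rw [polarFlux_divergence (hPd _ (hinterior p hp))
      (hQd _ (hinterior p hp)), hdiv _ (hinterior p hp), mul_zero]
  have hae : (fun p => fderiv ℝ f p (1, 0) + fderiv ℝ g p (0, 1))
      =ᵐ[volume.restrict (Icc (0, 0) (r, π))] 0 := by
    rw [Icc_prod_eq, Measure.volume_eq_prod,
      Measure.restrict_congr_set (Measure.set_prod_ae_eq Ioo_ae_eq_Icc Ioo_ae_eq_Icc).symm]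
    filter_upwards [ae_restrict_mem (measurableSet_Ioo.prod measurableSet_Ioo)] with p hp
    exact hdiv_polar p hp
  have hgauss := integral_divergence_prod_Icc_of_hasFDerivAt_of_le f g (fderiv ℝ f) (fderiv ℝ g)
    (0, 0) (r, π) hle (continuousOn_polarRadialFlux hPc hQc hmaps)
    (continuousOn_polarAngularFlux hPc hQc hmaps)
    (fun p hp => (differentiableAt_polarRadialFlux (hPd _ (hinterior p hp))
      (hQd _ (hinterior p hp))).hasFDerivAt)
    (fun p hp => (differentiableAt_polarAngularFlux (hPd _ (hinterior p hp))
      (hQd _ (hinterior p hp))).hasFDerivAt)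
    ((integrableOn_congr_fun_ae hae).2 integrableOn_zero)
  have hg_diameter :
      ∀ θ, sin θ = 0 → θ ∈ Icc 0 π → ∀ s ∈ uIcc 0 r, g (s, θ) = 0 := by
    intro θ hsin hθ s hs
    rw [uIcc_of_le hr] at hs
    have hx := polarPt_mem_closedHalfDisc hs hθ
    simp [g, polarAngularFlux, hsin, hQ _ hx (by simp [polarPt, pt, hsin])]
  rw [integral_congr_ae hae,
    intervalIntegral.integral_congr (hg_diameter 0 sin_zero ⟨le_rfl, pi_pos.le⟩),
    intervalIntegral.integral_congr (hg_diameter π sin_pi ⟨pi_pos.le, le_rfl⟩)] at hgauss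
  simpa [f, polarRadialFlux] using hgauss

section AngularMomentum

variable {ι : Type*} {u : E2 → EuclideanSpace ℝ ι} {x : E2}

def angularMomentumFlux (u : E2 → EuclideanSpace ℝ ι) (i j : ι) (k : Fin 2) (x : E2) : ℝ :=
  u x j * fderiv ℝ u x (e2 k) i - u x i * fderiv ℝ u x (e2 k) j

theorem angularMomentumFlux_eq_zero_of_parallel {k : Fin 2} {c : ℝ}
    (h : fderiv ℝ u x (e2 k) = c • u x) (i j : ι) : angularMomentumFlux u i j k x = 0 := by
  simp only [angularMomentumFlux, h, PiLp.smul_apply, smul_eq_mul]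
  ring

variable [Fintype ι]

theorem contDiffAt_partialDeriv (hu : ContDiffAt ℝ 2 u x) (k : Fin 2) :
    ContDiffAt ℝ 1 (fun y => fderiv ℝ u y (e2 k)) x :=
  (hu.fderiv_right (m := 1) le_rfl).clm_apply contDiffAt_const

theorem contDiffAt_angularMomentumFlux (hu : ContDiffAt ℝ 2 u x) (i j : ι) (k : Fin 2) :
    ContDiffAt ℝ 1 (angularMomentumFlux u i j k) x := by
  have hcoord : ∀ {v : E2 → EuclideanSpace ℝ ι}, ContDiffAt ℝ 1 v x → ∀ m,
      ContDiffAt ℝ 1 (fun y => v y m) x :=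
    fun hv m => (EuclideanSpace.proj (𝕜 := ℝ) m).contDiff.contDiffAt.comp x hv
  have hu1 : ContDiffAt ℝ 1 u x := hu.of_le one_le_two
  have hdu := contDiffAt_partialDeriv hu k
  exact ((hcoord hu1 j).mul (hcoord hdu i)).sub ((hcoord hu1 i).mul (hcoord hdu j))

theorem fderiv_angularMomentumFlux_apply (hu : ContDiffAt ℝ 2 u x) (i j : ι) (k : Fin 2)
    (v : E2) :
    fderiv ℝ (angularMomentumFlux u i j k) x v
      = fderiv ℝ u x v j * fderiv ℝ u x (e2 k) i
          + u x j * fderiv ℝ (fun y => fderiv ℝ u y (e2 k)) x v i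
        - (fderiv ℝ u x v i * fderiv ℝ u x (e2 k) j
          + u x i * fderiv ℝ (fun y => fderiv ℝ u y (e2 k)) x v j) := by
  have hcoord : ∀ {v : E2 → EuclideanSpace ℝ ι}, DifferentiableAt ℝ v x → ∀ m,
      HasFDerivAt (fun y => v y m) (EuclideanSpace.proj (𝕜 := ℝ) m ∘L fderiv ℝ v x) x :=
    fun hv m => (EuclideanSpace.proj (𝕜 := ℝ) m).hasFDerivAt.comp x hv.hasFDerivAt
  have hu1 : DifferentiableAt ℝ u x := hu.differentiableAt two_ne_zero
  have hdu := (contDiffAt_partialDeriv hu k).differentiableAt one_ne_zero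
  have h := ((hcoord hu1 j).mul (hcoord hdu i)).sub ((hcoord hu1 i).mul (hcoord hdu j))
  rw [(h.congr_of_eventuallyEq (f₁ := angularMomentumFlux u i j k)
    (.of_forall fun _ => rfl)).fderiv]
  simp only [sub_apply, add_apply, smul_apply, ContinuousLinearMap.comp_apply, PiLp.proj_apply,
    smul_eq_mul]
  ring

theorem angularMomentumFlux_divergence (hu : ContDiffAt ℝ 2 u x) (i j : ι) :
    fderiv ℝ (angularMomentumFlux u i j 0) x (e2 0)
        + fderiv ℝ (angularMomentumFlux u i j 1) x (e2 1)
      = u x j * lapl u x i - u x i * lapl u x j := by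
  simp only [fderiv_angularMomentumFlux_apply hu, lapl, Fin.sum_univ_two, PiLp.add_apply]
  ring

end AngularMomentum

theorem radialDeriv_polarPt {n : ℕ} (u : E2 → Ey n) {r : ℝ} (hr : 0 < r) (θ : ℝ) :
    radialDeriv u (polarPt (r, θ))
      = cos θ • fderiv ℝ u (polarPt (r, θ)) (e2 0)
        + sin θ • fderiv ℝ u (polarPt (r, θ)) (e2 1) := by
  have hdir : ‖polarPt (r, θ)‖⁻¹ • polarPt (r, θ) = cos θ • e2 0 + sin θ • e2 1 := by
    rw [norm_polarPt hr.le, polarPt_eq_smul_add, smul_add, smul_smul, smul_smul,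
      inv_mul_cancel_left₀ hr.ne', inv_mul_cancel_left₀ hr.ne']
  rw [radialDeriv, hdir, map_add, map_smul, map_smul]

theorem angularMomentum_radialFlux_eq_polarRadialFlux {n : ℕ} (u : E2 → Ey n)
    (i j : Fin (n + 1)) {r : ℝ} (hr : 0 < r) (θ : ℝ) :
    (u (polarPt (r, θ)) j * radialDeriv u (polarPt (r, θ)) i
        - u (polarPt (r, θ)) i * radialDeriv u (polarPt (r, θ)) j) * r
      = polarRadialFlux (angularMomentumFlux u i j 0) (angularMomentumFlux u i j 1) (r, θ) := by
  simp only [radialDeriv_polarPt u hr, polarRadialFlux, angularMomentumFlux, PiLp.add_apply,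
    PiLp.smul_apply, smul_eq_mul]
  ring

theorem flux_vanishing_half_circles_general (n : ℕ) (u : E2 → Ey n)
    (hu : IsFBHarmonic n u) :
    ∀ i j : Fin (n + 1), ∀ r : ℝ, 0 < r → r < 1 →
      (∫ θ in (0:ℝ)..Real.pi,
          (u (pt (r * Real.cos θ) (r * Real.sin θ)) j
              * radialDeriv u (pt (r * Real.cos θ) (r * Real.sin θ)) i
            - u (pt (r * Real.cos θ) (r * Real.sin θ)) i
              * radialDeriv u (pt (r * Real.cos θ) (r * Real.sin θ)) j) * r) = 0 := by
  intro i j r hr hr1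
  obtain ⟨V, hV, hdisc, hsmooth⟩ := hu.smooth
  have hC2 : ∀ x ∈ closedHalfDisc r, ContDiffAt ℝ 2 u x := fun x hx =>
    (hsmooth.contDiffAt (hV.mem_nhds (hdisc (closedHalfDisc_subset hr.le hr1.le hx)))).of_le
      (WithTop.coe_le_coe.2 le_top)
  have hflux :
      ∀ k, ∀ x ∈ closedHalfDisc r, ContDiffAt ℝ 1 (angularMomentumFlux u i j k) x :=
    fun k x hx => contDiffAt_angularMomentumFlux (hC2 x hx) i j k
  have hopen : halfDisc r ⊆ closedHalfDisc r := fun x hx => ⟨hx.1.le, hx.2.le⟩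
  refine (intervalIntegral.integral_congr fun θ _ =>
    angularMomentum_radialFlux_eq_polarRadialFlux u i j hr θ).trans ?_
  exact integral_polarRadialFlux_eq_zero hr.le
    (fun x hx => (hflux 0 x hx).continuousAt.continuousWithinAt)
    (fun x hx => (hflux 1 x hx).continuousAt.continuousWithinAt)
    (fun x hx => (hflux 0 x (hopen hx)).differentiableAt one_ne_zero)
    (fun x hx => (hflux 1 x (hopen hx)).differentiableAt one_ne_zero)
    (fun x hx => by
      rw [angularMomentumFlux_divergence (hC2 x (hopen hx)),
        hu.harmonic x (halfDisc_subset hr.le hr1.le hx)]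
      simp)
    (fun x hx hx1 => by
      obtain ⟨c, hc⟩ := hu.free x (mem_Iseg_of_mem_closedHalfDisc hr.le hr1 hx hx1)
      exact angularMomentumFlux_eq_zero_of_parallel hc i j)

/-- **Vanishing of angular-momentum flux through half-circles.** For a smooth harmonic
map with free boundary `u` on `𝔻⁺ ∪ I`, for all components `i, j` and all `0 < r < 1`,
`∫₀^π (u_j ∂_ρ u_i − u_i ∂_ρ u_j)(r cos θ, r sin θ) r dθ = 0`. -/
theorem flux_vanishing_half_circles (n : ℕ) (hn : 2 ≤ n) (u : E2 → Ey n)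
    (hu : IsFBHarmonic n u) :
    ∀ i j : Fin (n + 1), ∀ r : ℝ, 0 < r → r < 1 →
      (∫ θ in (0:ℝ)..Real.pi,
          (u (pt (r * Real.cos θ) (r * Real.sin θ)) j
              * radialDeriv u (pt (r * Real.cos θ) (r * Real.sin θ)) i
            - u (pt (r * Real.cos θ) (r * Real.sin θ)) i
              * radialDeriv u (pt (r * Real.cos θ) (r * Real.sin θ)) j) * r) = 0 :=
  flux_vanishing_half_circles_general n u hu
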